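/- Work with a deterministic finite-horizon MDP: S is a finite type of states, 𝒜 is a finite type of actions, f : S → 𝒜 → S is a deterministic transition function, r : S → 𝒜 → ℝ is a reward function, T ⊆ S is a set of terminal states, and there is a height function h : S → ℕ with h(s) = 0 if and only if s ∈ T and h(f(s,a)) < h(s) for every non-terminal s and every action a. Let β > 0 and let π_ref be a policy with π_ref(a|s) > 0 for all s, a. Let ν_S : S → ℝ satisfy ν_S(s) > 0 for every non-terminal s, and for each non-terminal s let ν_A(·|s) be a probability mass function on 𝒜 with ν_A(a|s) > 0 for all a. Suppose the policy π⁺, with π⁺(a|s) > 0 for all s, a, minimizes L(π) = (1/2)·∑_{s non-terminal} ν_S(s)·∑_a ν_A(a|s)·(A^{π_ref}(s,a)/β − log(π(a|s)/π_ref(a|s)))² over all policies π with π(a|s) > 0 for all s, a. Then for every initial distribution μ on S, V^{π⁺}(μ) ≥ V^{π_ref}(μ). -/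

import Mathlib

/-!
At a non-terminal state `s` the DAPO loss depends on `π` only through `π(·|s)`, so `π⁺(·|s)`
minimises the per-state loss over the open simplex. There the Lagrange condition makes the
residuals `A/β - log (π⁺/πref)` equal to `m · π⁺/ν_A` for one multiplier `m`. If `m < 0` then
`π⁺ > πref · exp (A/β)` pointwise, which is impossible since `∑ πref · exp (A/β) ≥ 1` by Jensen
(`E_πref A = 0`). Hence `E_π⁺ [A/β] ≥ KL(π⁺ ‖ πref)`: `π⁺` improves on the regularized Bellman
backup of `V^πref`, and induction on the height gives `V^πref ≤ V_β^π⁺`. Finally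
`V_β^π⁺ ≤ V^π⁺` because the KL penalty is nonnegative.
-/

/-- Unregularized value of a policy in a deterministic finite-horizon MDP,
defined by recursion on the height function `h`. -/
noncomputable def Vpol {S 𝒜 : Type*} [Fintype 𝒜] (f : S → 𝒜 → S) (r : S → 𝒜 → ℝ)
    (T : Set S) [DecidablePred (· ∈ T)] (h : S → ℕ)
    (hdec : ∀ s ∉ T, ∀ a, h (f s a) < h s)
    (π : S → 𝒜 → ℝ) (s : S) : ℝ :=
  if s ∈ T then 0
  else ∑ a, π s a * (r s a + Vpol f r T h hdec π (f s a))
termination_by h s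
decreasing_by exact hdec s (by assumption) _

/-- KL-regularized value (w.r.t. the reference policy `πref`) of a policy in a
deterministic finite-horizon MDP, defined by recursion on the height function `h`. -/
noncomputable def Vbeta {S 𝒜 : Type*} [Fintype 𝒜] (f : S → 𝒜 → S) (r : S → 𝒜 → ℝ)
    (T : Set S) [DecidablePred (· ∈ T)] (h : S → ℕ)
    (hdec : ∀ s ∉ T, ∀ a, h (f s a) < h s)
    (β : ℝ) (πref π : S → 𝒜 → ℝ) (s : S) : ℝ :=
  if s ∈ T then 0
  else ∑ a, π s a *
    (r s a + Vbeta f r T h hdec β πref π (f s a) - β * Real.log (π s a / πref s a))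
termination_by h s
decreasing_by exact hdec s (by assumption) _

open Finset Filter Topology

def openSimplex (𝒜 : Type*) [Fintype 𝒜] : Set (𝒜 → ℝ) :=
  {q | (∀ a, 0 < q a) ∧ ∑ a, q a = 1}

section LogRatioLoss

variable {𝒜 : Type*} [Fintype 𝒜]

/-- The DAPO loss at one state, with `c` in the role of `A^πref(s, ·) / β`. -/
noncomputable def logRatioLoss (ν c πref q : 𝒜 → ℝ) : ℝ :=
  ∑ a, ν a * (c a - Real.log (q a / πref a)) ^ 2

theorem sum_mul_log_div_nonneg {p q : 𝒜 → ℝ} (hp : ∀ a, 0 ≤ p a) (hq : ∀ a, 0 < q a)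
    (hpq : ∑ a, p a = ∑ a, q a) : 0 ≤ ∑ a, p a * Real.log (p a / q a) := by
  have hkl : ∀ a, q a * InformationTheory.klFun (p a / q a)
      = p a * Real.log (p a / q a) + q a - p a := by
    intro a
    rw [InformationTheory.klFun_apply]
    field_simp [(hq a).ne']
  calc 0 ≤ ∑ a, q a * InformationTheory.klFun (p a / q a) :=
        sum_nonneg fun a _ => mul_nonneg (hq a).le
          (InformationTheory.klFun_nonneg (div_nonneg (hp a) (hq a).le))
    _ = ∑ a, p a * Real.log (p a / q a) := by
        simp only [hkl, sum_sub_distrib, sum_add_distrib, hpq, add_sub_cancel_right]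

theorem one_le_sum_mul_exp {π c : 𝒜 → ℝ} (hπ : ∀ a, 0 ≤ π a) (hπ1 : ∑ a, π a = 1)
    (hc : ∑ a, π a * c a = 0) : 1 ≤ ∑ a, π a * Real.exp (c a) :=
  calc 1 = ∑ a, π a * (c a + 1) := by simp [mul_add, sum_add_distrib, hπ1, hc]
    _ ≤ ∑ a, π a * Real.exp (c a) :=
        sum_le_sum fun a _ => mul_le_mul_of_nonneg_left (Real.add_one_le_exp _) (hπ a)

theorem hasDerivAt_logRatioLoss_add_smul {ν c πref p : 𝒜 → ℝ} (hπref : ∀ a, πref a ≠ 0)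
    (hp : ∀ a, p a ≠ 0) (d : 𝒜 → ℝ) :
    HasDerivAt (fun t : ℝ => logRatioLoss ν c πref (p + t • d))
      (-2 * ∑ a, ν a * (c a - Real.log (p a / πref a)) / p a * d a) 0 := by
  have hterm : ∀ a, HasDerivAt
      (fun t : ℝ => ν a * (c a - Real.log ((p a + t * d a) / πref a)) ^ 2)
      (-2 * (ν a * (c a - Real.log (p a / πref a)) / p a * d a)) 0 := by
    intro a
    have hline : HasDerivAt (fun t : ℝ => (p a + t * d a) / πref a) (d a / πref a) 0 := by
      simpa using (((hasDerivAt_id (0 : ℝ)).mul_const (d a)).const_add (p a)).div_const (πref a)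
    have hpos : (p a + 0 * d a) / πref a ≠ 0 := by simpa using div_ne_zero (hp a) (hπref a)
    refine ((((hline.log hpos).const_sub (c a)).pow 2).const_mul (ν a)).congr_deriv ?_
    norm_num
    field_simp [hp a, hπref a]
  rw [mul_sum]
  refine (HasDerivAt.fun_sum (u := univ) fun a _ => hterm a).congr_of_eventuallyEq
    (.of_forall fun t => ?_)
  simp [logRatioLoss]

/-- The Lagrange condition for `∑ q = 1`, obtained by perturbing `p` along `e_a - e_b`. -/
theorem logRatioLoss_residual_div_eq_of_isMinOn {ν c πref p : 𝒜 → ℝ} (hπref : ∀ a, 0 < πref a)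
    (hp : p ∈ openSimplex 𝒜) (hmin : IsMinOn (logRatioLoss ν c πref) (openSimplex 𝒜) p)
    (a b : 𝒜) :
    ν a * (c a - Real.log (p a / πref a)) / p a = ν b * (c b - Real.log (p b / πref b)) / p b := by
  classical
  set d : 𝒜 → ℝ := Pi.single a 1 - Pi.single b 1
  have hline : ∀ᶠ t in 𝓝 (0 : ℝ), p + t • d ∈ openSimplex 𝒜 := by
    have hpos : ∀ a', ∀ᶠ t in 𝓝 (0 : ℝ), 0 < p a' + t * d a' := fun a' =>
      ((Continuous.tendsto' (by fun_prop) 0 (p a') (by simp)).eventually_const_lt (hp.1 a'))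
    filter_upwards [eventually_all.2 hpos] with t ht
    refine ⟨ht, ?_⟩
    simp [d, sum_add_distrib, ← mul_sum, sum_sub_distrib, hp.2]
  have hlocal : IsLocalMin (fun t : ℝ => logRatioLoss ν c πref (p + t • d)) 0 := by
    filter_upwards [hline] with t ht
    simpa using isMinOn_iff.1 hmin _ ht
  have hderiv := hlocal.hasDerivAt_eq_zero
    (hasDerivAt_logRatioLoss_add_smul (fun a => (hπref a).ne') (fun a => (hp.1 a).ne') d)
  simp only [d, Pi.sub_apply, Pi.single_apply, mul_sub, sum_sub_distrib, mul_ite, mul_one,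
    mul_zero, sum_ite_eq', mem_univ, if_true] at hderiv
  linear_combination (-1 / 2 : ℝ) * hderiv

theorem sum_mul_sub_log_div_nonneg_of_isMinOn {ν c πref p : 𝒜 → ℝ} (hν : ∀ a, 0 < ν a)
    (hπref : ∀ a, 0 < πref a) (hπref1 : ∑ a, πref a = 1) (hc : ∑ a, πref a * c a = 0)
    (hp : p ∈ openSimplex 𝒜) (hmin : IsMinOn (logRatioLoss ν c πref) (openSimplex 𝒜) p) :
    0 ≤ ∑ a, p a * (c a - Real.log (p a / πref a)) := by
  obtain ⟨hppos, hp1⟩ := id hp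
  have hne : Nonempty 𝒜 := by
    by_contra hempty
    simp [not_nonempty_iff.1 hempty] at hp1
  set x : 𝒜 → ℝ := fun a => Real.log (p a / πref a)
  obtain ⟨m, hm⟩ : ∃ m, ∀ a, ν a * (c a - x a) / p a = m :=
    ⟨_, fun a => logRatioLoss_residual_div_eq_of_isMinOn hπref hp hmin a hne.some⟩
  have hres : ∀ a, c a - x a = m * (p a / ν a) := by
    intro a
    rw [← hm a]
    field_simp [(hν a).ne', (hppos a).ne']
  have hm0 : 0 ≤ m := by
    by_contra! hm
    have hlt : ∀ a, c a < x a := fun a => by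
      have := mul_neg_of_neg_of_pos hm (div_pos (hppos a) (hν a))
      linarith [hres a]
    have hexp : ∀ a, πref a * Real.exp (x a) = p a := fun a => by
      rw [Real.exp_log (div_pos (hppos a) (hπref a)), mul_div_cancel₀ _ (hπref a).ne']
    have := sum_lt_sum_of_nonempty univ_nonempty fun a _ =>
      mul_lt_mul_of_pos_left (Real.exp_lt_exp.2 (hlt a)) (hπref a)
    simp only [hexp, hp1] at this
    linarith [one_le_sum_mul_exp (fun a => (hπref a).le) hπref1 hc]
  calc 0 ≤ ∑ a, p a * (m * (p a / ν a)) := sum_nonneg fun a _ =>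
        mul_nonneg (hppos a).le (mul_nonneg hm0 (div_pos (hppos a) (hν a)).le)
    _ = ∑ a, p a * (c a - x a) := by simp only [hres]

end LogRatioLoss

theorem isMinOn_apply_of_isMinOn_sum {ι α : Type*} {s : Finset ι}
    {w : ι → ℝ} {g : ι → α → ℝ} {K : ι → Set α} {x : ι → α}
    (hmin : IsMinOn (fun y => ∑ j ∈ s, w j * g j (y j)) (Set.univ.pi K) x)
    (hx : x ∈ Set.univ.pi K) {i : ι} (hi : i ∈ s) (hw : 0 < w i) :
    IsMinOn (g i) (K i) (x i) := by
  classical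
  refine isMinOn_iff.2 fun z hz => le_of_mul_le_mul_left ?_ hw
  have hupdate : Function.update x i z ∈ Set.univ.pi K := by
    intro j _
    rcases eq_or_ne j i with rfl | hj
    · simpa using hz
    · simpa [hj] using hx j trivial
  have := isMinOn_iff.1 hmin _ hupdate
  simp only [Function.apply_update (fun j y => w j * g j y), sum_update_of_mem hi] at this
  rwa [sum_eq_add_sum_sdiff_singleton_of_mem hi, add_le_add_iff_right] at this

section MDP

variable {S 𝒜 : Type*} {f : S → 𝒜 → S} {T : Set S} {h : S → ℕ}

@[elab_as_elim]
theorem height_induction (hdec : ∀ s ∉ T, ∀ a, h (f s a) < h s) {P : S → Prop}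
    (terminal : ∀ s ∈ T, P s) (step : ∀ s ∉ T, (∀ a, P (f s a)) → P s) (s : S) : P s := by
  induction hs : h s using Nat.strong_induction_on generalizing s with
  | _ n ih =>
    by_cases hsT : s ∈ T
    · exact terminal s hsT
    · exact step s hsT fun a => ih _ (hs ▸ hdec s hsT a) _ rfl

variable [Fintype 𝒜] {r : S → 𝒜 → ℝ} [DecidablePred (· ∈ T)]
  {hdec : ∀ s ∉ T, ∀ a, h (f s a) < h s} {s : S}

theorem Vpol_of_mem {π : S → 𝒜 → ℝ} (hs : s ∈ T) : Vpol f r T h hdec π s = 0 := by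
  rw [Vpol, if_pos hs]

theorem Vpol_of_notMem {π : S → 𝒜 → ℝ} (hs : s ∉ T) :
    Vpol f r T h hdec π s = ∑ a, π s a * (r s a + Vpol f r T h hdec π (f s a)) := by
  rw [Vpol, if_neg hs]

theorem Vbeta_of_mem {β : ℝ} {πref π : S → 𝒜 → ℝ} (hs : s ∈ T) :
    Vbeta f r T h hdec β πref π s = 0 := by
  rw [Vbeta, if_pos hs]

theorem Vbeta_of_notMem {β : ℝ} {πref π : S → 𝒜 → ℝ} (hs : s ∉ T) :
    Vbeta f r T h hdec β πref π s = ∑ a, π s a *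
      (r s a + Vbeta f r T h hdec β πref π (f s a) - β * Real.log (π s a / πref s a)) := by
  rw [Vbeta, if_neg hs]

noncomputable def advantage (f : S → 𝒜 → S) (r : S → 𝒜 → ℝ) (T : Set S) [DecidablePred (· ∈ T)]
    (h : S → ℕ) (hdec : ∀ s ∉ T, ∀ a, h (f s a) < h s) (π : S → 𝒜 → ℝ) (s : S) (a : 𝒜) : ℝ :=
  r s a + Vpol f r T h hdec π (f s a) - Vpol f r T h hdec π s

theorem sum_mul_advantage_eq_zero {π : S → 𝒜 → ℝ} (hπ : ∑ a, π s a = 1) (hs : s ∉ T) :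
    ∑ a, π s a * advantage f r T h hdec π s a = 0 := by
  simp only [advantage, mul_sub, sum_sub_distrib, ← sum_mul, hπ, one_mul]
  exact sub_eq_zero.2 (Vpol_of_notMem hs).symm

theorem Vbeta_le_Vpol {β : ℝ} (hβ : 0 ≤ β) {πref π : S → 𝒜 → ℝ} (hπref : ∀ s a, 0 < πref s a)
    (hπ : ∀ s a, 0 ≤ π s a) (hsum : ∀ s, ∑ a, π s a = ∑ a, πref s a) (s : S) :
    Vbeta f r T h hdec β πref π s ≤ Vpol f r T h hdec π s := by
  refine height_induction hdec (fun s hs => by rw [Vbeta_of_mem hs, Vpol_of_mem hs])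
    (fun s hs ih => ?_) s
  rw [Vbeta_of_notMem hs, Vpol_of_notMem hs]
  calc ∑ a, π s a * (r s a + Vbeta f r T h hdec β πref π (f s a) - β * Real.log (π s a / πref s a))
      ≤ ∑ a, π s a * (r s a + Vpol f r T h hdec π (f s a) - β * Real.log (π s a / πref s a)) :=
        sum_le_sum fun a _ => mul_le_mul_of_nonneg_left (by linarith [ih a]) (hπ s a)
    _ = ∑ a, π s a * (r s a + Vpol f r T h hdec π (f s a))
          - β * ∑ a, π s a * Real.log (π s a / πref s a) := by
        rw [mul_sum, ← sum_sub_distrib]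
        exact sum_congr rfl fun a _ => by ring
    _ ≤ ∑ a, π s a * (r s a + Vpol f r T h hdec π (f s a)) :=
        sub_le_self _ (mul_nonneg hβ (sum_mul_log_div_nonneg (hπ s) (hπref s) (hsum s)))

theorem Vpol_le_Vbeta_of_improving {β : ℝ} {π' πref π : S → 𝒜 → ℝ} (hπ : ∀ s a, 0 ≤ π s a)
    (himp : ∀ s ∉ T, Vpol f r T h hdec π' s ≤ ∑ a, π s a *
      (r s a + Vpol f r T h hdec π' (f s a) - β * Real.log (π s a / πref s a)))
    (s : S) : Vpol f r T h hdec π' s ≤ Vbeta f r T h hdec β πref π s := by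
  refine height_induction hdec (fun s hs => by rw [Vbeta_of_mem hs, Vpol_of_mem hs])
    (fun s hs ih => ?_) s
  rw [Vbeta_of_notMem hs]
  exact (himp s hs).trans <|
    sum_le_sum fun a _ => mul_le_mul_of_nonneg_left (by linarith [ih a]) (hπ s a)

/-- The right-hand side is the KL-regularized Bellman backup of `V^πref` under `p`. -/
theorem Vpol_le_backup_of_isMinOn {β : ℝ} (hβ : 0 < β)
    {πref : S → 𝒜 → ℝ} {ν p : 𝒜 → ℝ} (hν : ∀ a, 0 < ν a)
    (hπref : ∀ a, 0 < πref s a) (hπref1 : ∑ a, πref s a = 1) (hs : s ∉ T)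
    (hp : p ∈ openSimplex 𝒜)
    (hmin : IsMinOn (logRatioLoss ν (fun a => advantage f r T h hdec πref s a / β) (πref s))
      (openSimplex 𝒜) p) :
    Vpol f r T h hdec πref s ≤ ∑ a, p a *
      (r s a + Vpol f r T h hdec πref (f s a) - β * Real.log (p a / πref s a)) := by
  have hc : ∑ a, πref s a * (advantage f r T h hdec πref s a / β) = 0 := by
    simp only [mul_div_assoc', ← sum_div, sum_mul_advantage_eq_zero hπref1 hs, zero_div]
  have hgain := sum_mul_sub_log_div_nonneg_of_isMinOn hν hπref hπref1 hc hp hmin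
  have hsplit : ∑ a, p a * (r s a + Vpol f r T h hdec πref (f s a) - β * Real.log (p a / πref s a))
      = Vpol f r T h hdec πref s + β * ∑ a, p a *
        (advantage f r T h hdec πref s a / β - Real.log (p a / πref s a)) := by
    conv_rhs => rw [← one_mul (Vpol f r T h hdec πref s), ← hp.2, sum_mul, mul_sum,
      ← sum_add_distrib]
    refine sum_congr rfl fun a _ => ?_
    simp only [advantage]
    field_simp
    ring
  rw [hsplit]
  exact le_add_of_nonneg_right (mul_nonneg hβ.le hgain)

end MDP

theorem dapo_monotonic_improvement_unregularized_general {S 𝒜 : Type*} [Fintype S] [Fintype 𝒜]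
    (f : S → 𝒜 → S) (r : S → 𝒜 → ℝ)
    (T : Set S) [DecidablePred (· ∈ T)] (h : S → ℕ)
    (hdec : ∀ s ∉ T, ∀ a, h (f s a) < h s)
    (β : ℝ) (hβ : 0 < β)
    (πref : S → 𝒜 → ℝ)
    (hrefpos : ∀ s a, 0 < πref s a) (hrefsum : ∀ s, ∑ a, πref s a = 1)
    (νS : S → ℝ) (hνS : ∀ s ∉ T, 0 < νS s)
    (νA : S → 𝒜 → ℝ)
    (hνApos : ∀ s ∉ T, ∀ a, 0 < νA s a)
    (πplus : S → 𝒜 → ℝ)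
    (hpluspos : ∀ s a, 0 < πplus s a) (hplussum : ∀ s, ∑ a, πplus s a = 1)
    (hmin : ∀ π : S → 𝒜 → ℝ, (∀ s a, 0 < π s a) → (∀ s, ∑ a, π s a = 1) →
      (1 / 2) * ∑ s ∈ Finset.univ.filter (fun s => s ∉ T), νS s *
          ∑ a, νA s a *
            ((r s a + Vpol f r T h hdec πref (f s a) - Vpol f r T h hdec πref s) / β
              - Real.log (πplus s a / πref s a)) ^ 2 ≤
        (1 / 2) * ∑ s ∈ Finset.univ.filter (fun s => s ∉ T), νS s *
          ∑ a, νA s a *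
            ((r s a + Vpol f r T h hdec πref (f s a) - Vpol f r T h hdec πref s) / β
              - Real.log (π s a / πref s a)) ^ 2) :
    ∀ μ : S → ℝ, (∀ s, 0 ≤ μ s) → ∑ s, μ s = 1 →
      ∑ s, μ s * Vpol f r T h hdec πref s ≤
        ∑ s, μ s * Vpol f r T h hdec πplus s := by
  intro μ hμ _
  have hplus : πplus ∈ Set.univ.pi fun _ => openSimplex 𝒜 :=
    fun s _ => ⟨hpluspos s, hplussum s⟩
  have hjoint : IsMinOn (fun π => ∑ s ∈ univ.filter (· ∉ T), νS s *
      logRatioLoss (νA s) (fun a => advantage f r T h hdec πref s a / β) (πref s) (π s))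
      (Set.univ.pi fun _ => openSimplex 𝒜) πplus := isMinOn_iff.2 fun π hπ =>
    le_of_mul_le_mul_left (hmin π (fun s => (hπ s trivial).1) (fun s => (hπ s trivial).2))
      one_half_pos
  have himp : ∀ s ∉ T, Vpol f r T h hdec πref s ≤ ∑ a, πplus s a *
      (r s a + Vpol f r T h hdec πref (f s a) - β * Real.log (πplus s a / πref s a)) :=
    fun s hs => Vpol_le_backup_of_isMinOn hβ (hνApos s hs) (hrefpos s) (hrefsum s) hs
      (hplus s trivial)
      (isMinOn_apply_of_isMinOn_sum hjoint hplus (by simpa using hs) (hνS s hs))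
  refine sum_le_sum fun s _ => mul_le_mul_of_nonneg_left ?_ (hμ s)
  exact (Vpol_le_Vbeta_of_improving (fun s a => (hpluspos s a).le) himp s).trans
    (Vbeta_le_Vpol hβ.le hrefpos (fun s a => (hpluspos s a).le)
      (fun s => (hplussum s).trans (hrefsum s).symm) s)

/-- **Theorem 1 (monotonic improvement).** The solution of the exact DAPO
least-squares objective under exploratory state and action sampling distributions
also has unregularized value at least that of the reference policy. -/
theorem dapo_monotonic_improvement_unregularized {S 𝒜 : Type*} [Fintype S] [Fintype 𝒜]
    (f : S → 𝒜 → S) (r : S → 𝒜 → ℝ)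
    (T : Set S) [DecidablePred (· ∈ T)] (h : S → ℕ)
    (hT : ∀ s, h s = 0 ↔ s ∈ T)
    (hdec : ∀ s ∉ T, ∀ a, h (f s a) < h s)
    (β : ℝ) (hβ : 0 < β)
    (πref : S → 𝒜 → ℝ)
    (hrefpos : ∀ s a, 0 < πref s a) (hrefsum : ∀ s, ∑ a, πref s a = 1)
    (νS : S → ℝ) (hνS : ∀ s ∉ T, 0 < νS s)
    (νA : S → 𝒜 → ℝ)
    (hνApos : ∀ s ∉ T, ∀ a, 0 < νA s a) (hνAsum : ∀ s ∉ T, ∑ a, νA s a = 1)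
    (πplus : S → 𝒜 → ℝ)
    (hpluspos : ∀ s a, 0 < πplus s a) (hplussum : ∀ s, ∑ a, πplus s a = 1)
    (hmin : ∀ π : S → 𝒜 → ℝ, (∀ s a, 0 < π s a) → (∀ s, ∑ a, π s a = 1) →
      (1 / 2) * ∑ s ∈ Finset.univ.filter (fun s => s ∉ T), νS s *
          ∑ a, νA s a *
            ((r s a + Vpol f r T h hdec πref (f s a) - Vpol f r T h hdec πref s) / β
              - Real.log (πplus s a / πref s a)) ^ 2 ≤
        (1 / 2) * ∑ s ∈ Finset.univ.filter (fun s => s ∉ T), νS s *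
          ∑ a, νA s a *
            ((r s a + Vpol f r T h hdec πref (f s a) - Vpol f r T h hdec πref s) / β
              - Real.log (π s a / πref s a)) ^ 2) :
    ∀ μ : S → ℝ, (∀ s, 0 ≤ μ s) → ∑ s, μ s = 1 →
      ∑ s, μ s * Vpol f r T h hdec πref s ≤
        ∑ s, μ s * Vpol f r T h hdec πplus s :=
  dapo_monotonic_improvement_unregularized_general f r T h hdec β hβ πref hrefpos hrefsum νS hνS νA
    hνApos πplus hpluspos hplussum hmin
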